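/- The operator ∇⁰_Z is compatible with the module-valued inner product: for Schwartz functions f, g one has ⟨∇⁰_Z f, g⟩(x,y,p) + ⟨f, ∇⁰_Z g⟩(x,y,p) = 2πi p ⟨f,g⟩(x,y,p) = δ_Z(⟨f,g⟩)(x,y,p), where ⟨f,g⟩(x,y,p) = Σ_k e(-ckp(y-pν)) f(x+k,y) conj(g(x-2pμ+k, y-2pν)) and (∇⁰_Z f)(x,y) = (πix/μ) f(x,y). -/

import Mathlib

open Real

/-- The D-valued inner product ⟨f,g⟩(x,y,p) = Σ_k e(-ckp(y-pν)) f(x+k,y) conj(g(x-2pμ+k, y-2pν)). -/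
noncomputable def ip (c : ℕ) (μ ν : ℝ) (f g : ℝ → ℝ → ℂ) (x y : ℝ) (p : ℤ) : ℂ :=
  ∑' k : ℤ, Complex.exp (2 * (π : ℂ) * Complex.I *
      (-((c : ℂ) * (k : ℂ) * (p : ℂ) * ((y : ℂ) - (p : ℂ) * (ν : ℂ)))))
    * f (x + k) y * (starRingEnd ℂ) (g (x - 2 * p * μ + k) (y - 2 * p * ν))

noncomputable def nablaZ (μ : ℝ) (f : ℝ → ℝ → ℂ) (x y : ℝ) : ℂ :=
  (π : ℂ) * Complex.I * (x : ℂ) / (μ : ℂ) * f x y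

noncomputable def deltaZ (φ : ℝ → ℝ → ℤ → ℂ) (x y : ℝ) (p : ℤ) : ℂ :=
  2 * (π : ℂ) * Complex.I * (p : ℂ) * φ x y p

/-!
Since `∇⁰_Z` multiplies by `πi x / μ`, the `k`-th terms of `⟨∇⁰_Z f, g⟩` and `⟨f, ∇⁰_Z g⟩` are the
`k`-th term of `⟨f, g⟩` multiplied by `πi (x + k) / μ` and by `-πi (x - 2pμ + k) / μ`; these
factors add up to `2πi p`, independently of `k`. The only analysis is the summability of both
series, which follows from the decay `|t| ‖f (t, y)‖ ≤ C / |t| ^ 2` of a Schwartz function.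
-/

open scoped SchwartzMap

namespace SchwartzMap

variable {F V : Type*} [NormedAddCommGroup F] [NormedSpace ℝ F]
  [NormedAddCommGroup V] [NormedSpace ℝ V]

theorem abs_mul_norm_apply_le (f : 𝓢(ℝ × F, V)) (t : ℝ) (y : F) :
    |t| * ‖f (t, y)‖ ≤ SchwartzMap.seminorm ℝ 3 0 f / |t| ^ 2 := by
  rcases eq_or_ne t 0 with rfl | ht
  · simp
  rw [le_div_iff₀ (by positivity)]
  calc |t| * ‖f (t, y)‖ * |t| ^ 2 = ‖(t, y).1‖ ^ 3 * ‖f (t, y)‖ := by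
        rw [Real.norm_eq_abs]; ring
    _ ≤ ‖(t, y)‖ ^ 3 * ‖f (t, y)‖ := by gcongr; exact norm_fst_le _
    _ ≤ SchwartzMap.seminorm ℝ 3 0 f := norm_pow_mul_le_seminorm ℝ f 3 _

theorem summable_abs_mul_norm_apply_add_int (f : 𝓢(ℝ × F, V)) (x : ℝ) (y : F) :
    Summable fun k : ℤ => |x + k| * ‖f (x + k, y)‖ := by
  refine (((Real.summable_one_div_int_add_rpow x 2).mpr one_lt_two).mul_left
    (SchwartzMap.seminorm ℝ 3 0 f)).of_nonneg_of_le (fun _ => by positivity) fun k => ?_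
  calc |x + k| * ‖f (x + k, y)‖ ≤ SchwartzMap.seminorm ℝ 3 0 f / |x + k| ^ 2 :=
        abs_mul_norm_apply_le f _ y
    _ = SchwartzMap.seminorm ℝ 3 0 f * (1 / |k + x| ^ (2 : ℝ)) := by
        rw [add_comm (k : ℝ), Real.rpow_two, mul_one_div]

end SchwartzMap

noncomputable def ipTerm (c : ℕ) (μ ν : ℝ) (f g : ℝ → ℝ → ℂ) (x y : ℝ) (p k : ℤ) : ℂ :=
  Complex.exp (2 * (π : ℂ) * Complex.I *
      (-((c : ℂ) * (k : ℂ) * (p : ℂ) * ((y : ℂ) - (p : ℂ) * (ν : ℂ)))))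
    * f (x + k) y * (starRingEnd ℂ) (g (x - 2 * p * μ + k) (y - 2 * p * ν))

section ipTerm

variable (c : ℕ) (μ ν : ℝ) (f g : ℝ → ℝ → ℂ) (x y : ℝ) (p : ℤ)

theorem ip_eq_tsum_ipTerm : ip c μ ν f g x y p = ∑' k, ipTerm c μ ν f g x y p k := rfl

theorem norm_ipTerm (k : ℤ) :
    ‖ipTerm c μ ν f g x y p k‖ = ‖f (x + k) y‖ * ‖g (x - 2 * p * μ + k) (y - 2 * p * ν)‖ := by
  have hphase : 2 * (π : ℂ) * Complex.I *
      (-((c : ℂ) * (k : ℂ) * (p : ℂ) * ((y : ℂ) - (p : ℂ) * (ν : ℂ))))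
      = ((-(2 * π * (c * k * p * (y - p * ν))) : ℝ) : ℂ) * Complex.I := by
    push_cast; ring
  rw [ipTerm, norm_mul, norm_mul, hphase, Complex.norm_exp_ofReal_mul_I, one_mul,
    RCLike.norm_conj]

variable {c μ ν f g x y p}

theorem summable_ipTerm_of_left {M : ℝ} (hf : Summable fun k : ℤ => ‖f (x + k) y‖)
    (hg : ∀ a b, ‖g a b‖ ≤ M) : Summable (ipTerm c μ ν f g x y p) :=
  .of_norm_bounded (hf.mul_right M) fun k => by
    rw [norm_ipTerm]; exact mul_le_mul_of_nonneg_left (hg _ _) (norm_nonneg _)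

theorem summable_ipTerm_of_right {M : ℝ} (hf : ∀ a b, ‖f a b‖ ≤ M)
    (hg : Summable fun k : ℤ => ‖g (x - 2 * p * μ + k) (y - 2 * p * ν)‖) :
    Summable (ipTerm c μ ν f g x y p) :=
  .of_norm_bounded (hg.mul_left M) fun k => by
    rw [norm_ipTerm]; exact mul_le_mul_of_nonneg_right (hf _ _) (norm_nonneg _)

theorem ipTerm_nablaZ_left (k : ℤ) :
    ipTerm c μ ν (nablaZ μ f) g x y p k
      = (π : ℂ) * Complex.I * ((x + k : ℝ) : ℂ) / μ * ipTerm c μ ν f g x y p k := by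
  simp only [ipTerm, nablaZ]; ring

theorem ipTerm_nablaZ_right (k : ℤ) :
    ipTerm c μ ν f (nablaZ μ g) x y p k
      = -((π : ℂ) * Complex.I * ((x - 2 * p * μ + k : ℝ) : ℂ) / μ)
        * ipTerm c μ ν f g x y p k := by
  simp only [ipTerm, nablaZ, map_mul, map_div₀, Complex.conj_I, Complex.conj_ofReal]
  ring

theorem ipTerm_nablaZ_add (hμ : μ ≠ 0) (k : ℤ) :
    ipTerm c μ ν (nablaZ μ f) g x y p k + ipTerm c μ ν f (nablaZ μ g) x y p k
      = 2 * π * Complex.I * p * ipTerm c μ ν f g x y p k := by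
  rw [ipTerm_nablaZ_left, ipTerm_nablaZ_right, ← add_mul]
  congr 1
  have : (μ : ℂ) ≠ 0 := by exact_mod_cast hμ
  field_simp
  push_cast
  ring

theorem ip_nablaZ_add (hμ : μ ≠ 0) (hf : Summable (ipTerm c μ ν (nablaZ μ f) g x y p))
    (hg : Summable (ipTerm c μ ν f (nablaZ μ g) x y p)) :
    ip c μ ν (nablaZ μ f) g x y p + ip c μ ν f (nablaZ μ g) x y p
      = 2 * π * Complex.I * p * ip c μ ν f g x y p := by
  simp only [ip_eq_tsum_ipTerm, ← hf.tsum_add hg, ipTerm_nablaZ_add hμ, tsum_mul_left]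

end ipTerm

theorem summable_norm_nablaZ_schwartz (μ : ℝ) (f : 𝓢(ℝ × ℝ, ℂ)) (x y : ℝ) :
    Summable fun k : ℤ => ‖nablaZ μ (fun a b => f (a, b)) (x + k) y‖ :=
  ((f.summable_abs_mul_norm_apply_add_int x y).mul_left (π / |μ|)).congr fun k => by
    simp only [nablaZ, norm_mul, norm_div, Complex.norm_I, Complex.norm_real, Real.norm_eq_abs,
      abs_of_pos Real.pi_pos]
    ring

theorem stmt5_general (c : ℕ) (μ ν : ℝ) (hμ : μ ≠ 0)
    (f g : SchwartzMap (ℝ × ℝ) ℂ) :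
    ∀ (x y : ℝ) (p : ℤ),
      ip c μ ν (nablaZ μ (fun a b => f (a, b))) (fun a b => g (a, b)) x y p
          + ip c μ ν (fun a b => f (a, b)) (nablaZ μ (fun a b => g (a, b))) x y p
        = 2 * (π : ℂ) * Complex.I * (p : ℂ)
            * ip c μ ν (fun a b => f (a, b)) (fun a b => g (a, b)) x y p
      ∧ ip c μ ν (nablaZ μ (fun a b => f (a, b))) (fun a b => g (a, b)) x y p
          + ip c μ ν (fun a b => f (a, b)) (nablaZ μ (fun a b => g (a, b))) x y p
        = deltaZ (ip c μ ν (fun a b => f (a, b)) (fun a b => g (a, b))) x y p := by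
  intro x y p
  have h := ip_nablaZ_add (c := c) (ν := ν) (x := x) (y := y) (p := p) hμ
    (summable_ipTerm_of_left (summable_norm_nablaZ_schwartz μ f x y)
      fun a b => g.norm_le_seminorm ℝ (a, b))
    (summable_ipTerm_of_right (fun a b => f.norm_le_seminorm ℝ (a, b))
      (summable_norm_nablaZ_schwartz μ g _ _))
  exact ⟨h, h⟩

/-- ∇⁰_Z is compatible with the module-valued inner product:
⟨∇⁰_Z f, g⟩ + ⟨f, ∇⁰_Z g⟩ = 2πip ⟨f,g⟩ = δ_Z(⟨f,g⟩). -/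
theorem stmt5 (c : ℕ) (hc : 0 < c) (μ ν : ℝ) (hμ : μ ≠ 0) (hν : ν ≠ 0)
    (f g : SchwartzMap (ℝ × ℝ) ℂ) :
    ∀ (x y : ℝ) (p : ℤ),
      ip c μ ν (nablaZ μ (fun a b => f (a, b))) (fun a b => g (a, b)) x y p
          + ip c μ ν (fun a b => f (a, b)) (nablaZ μ (fun a b => g (a, b))) x y p
        = 2 * (π : ℂ) * Complex.I * (p : ℂ)
            * ip c μ ν (fun a b => f (a, b)) (fun a b => g (a, b)) x y p
      ∧ ip c μ ν (nablaZ μ (fun a b => f (a, b))) (fun a b => g (a, b)) x y p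
          + ip c μ ν (fun a b => f (a, b)) (nablaZ μ (fun a b => g (a, b))) x y p
        = deltaZ (ip c μ ν (fun a b => f (a, b)) (fun a b => g (a, b))) x y p :=
  stmt5_general c μ ν hμ f g
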